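/- For n ≥ 2, the simple graph whose vertex set is the set of all functions Fin n → Fin n, and in which two distinct functions f and g are adjacent if and only if they are exp-adjacent (i.e., f i ≠ g j for all i ≠ j), is not connected. (This is the disconnectedness of K_n^{K_n}, giving conn(Hom(K_2 × K_n, K_n)) = −1.) -/

import Mathlib

/-- `f` and `g` are adjacent in the exponential graph `K_m^{K_n}`:
for all `i ≠ j`, `f i ≠ g j`. -/
def ExpAdj {n m : ℕ} (f g : Fin n → Fin m) : Prop :=
  ∀ ⦃i j : Fin n⦄, i ≠ j → f i ≠ g j

/-- The simple graph on all functions `Fin n → Fin m` associated to the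
exponential graph `K_m^{K_n}`: two distinct functions are adjacent iff they
are exp-adjacent. -/
def expGraph (n m : ℕ) : SimpleGraph (Fin n → Fin m) where
  Adj f g := f ≠ g ∧ ExpAdj f g
  symm := by
    constructor
    rintro f g ⟨hne, hadj⟩
    exact ⟨hne.symm, fun i j hij => (hadj hij.symm).symm⟩
  loopless := ⟨fun f hf => hf.1 rfl⟩

/-! A surjective map `f : Fin n → Fin m` is an isolated vertex of `K_m^{K_n}`: if `g` is
exp-adjacent to `f`, then each value `g j` is attained by `f` only at `j`, so `g = f`.
For `2 ≤ m ≤ n` there are surjections and the graph has more than one vertex, so it is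
not connected. -/

theorem ExpAdj.eq_of_surjective {n m : ℕ} {f g : Fin n → Fin m} (hf : Function.Surjective f)
    (h : ExpAdj f g) : g = f := by
  funext j
  obtain ⟨i, hi⟩ := hf (g j)
  obtain rfl : i = j := by_contra fun hij => h hij hi
  exact hi.symm

theorem expGraph_isIsolated_of_surjective {n m : ℕ} {f : Fin n → Fin m}
    (hf : Function.Surjective f) : (expGraph n m).IsIsolated f :=
  fun _ hadj => hadj.1 (hadj.2.eq_of_surjective hf).symm

theorem expGraph_not_connected {n m : ℕ} (hm : 2 ≤ m) (hmn : m ≤ n) :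
    ¬ (expGraph n m).Connected := by
  have : Nontrivial (Fin m) := Fin.nontrivial_iff_two_le.mpr hm
  have : Nonempty (Fin n) := ⟨⟨0, by omega⟩⟩
  exact fun h => h.preconnected.not_isIsolated _ <|
    expGraph_isIsolated_of_surjective (Function.invFun_surjective (Fin.castLE_injective hmn))

theorem stmt_13 (n : ℕ) (hn : 2 ≤ n) : ¬ (expGraph n n).Connected :=
  expGraph_not_connected hn le_rfl
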